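/- arXiv:1304.5310 — 2 statements merged into one kernel-verified Lean document; each statement's English description precedes it below -/
import Mathlib

section
/- Suppose g solves the Poisson equation Ωg(i) = -f_i for all i ∈ T\{0} on a tree T. Then for every k ∈ T\{0} with |k| ≤ n, the identity Σ_{j ∈ E_{n+1} ∩ T_k} μ_j q_{jj*}(g_{j*} - g_j) + μ_k q_{kk*}(g_k - g_{k*}) = Σ_{j ∈ T_k ∩ T(n)} μ_j f_j holds, where T(n) is the set of vertices of layer ≤ n and E_{n+1} the set of vertices of layer n+1. -/
open Finset
open scoped Classical

structure BDTree (V : Type*) [Fintype V] where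
  root : V
  parent : V → V
  layer : V → ℕ
  q : V → V → ℝ
  parent_root : parent root = root
  layer_root : layer root = 0
  layer_parent : ∀ i, i ≠ root → layer i = layer (parent i) + 1
  reach : ∀ i, ∃ n, parent^[n] i = root
  q_pos_up : ∀ i, i ≠ root → 0 < q i (parent i)
  q_pos_down : ∀ i, i ≠ root → 0 < q (parent i) i

namespace BDTree

variable {V : Type*} [Fintype V] (T : BDTree V)

/-- The set of sons of a vertex. -/
noncomputable def sons (i : V) : Finset V :=
  Finset.univ.filter fun j => j ≠ T.root ∧ T.parent j = i

/-- The subtree `T_k` rooted at `k` (including `k`). -/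
noncomputable def subtree (k : V) : Finset V :=
  Finset.univ.filter fun j => ∃ n, T.parent^[n] j = k

/-- The path set `P(i)`: vertices (excluding the root) on the path from `i` to the root. -/
noncomputable def pathSet (i : V) : Finset V :=
  Finset.univ.filter fun k => k ≠ T.root ∧ ∃ n, T.parent^[n] i = k

/-- The symmetric measure `μ`. -/
noncomputable def mu (k : V) : ℝ :=
  ∏ j ∈ T.pathSet k, T.q (T.parent j) j / T.q j (T.parent j)

/-- The operator `Ω`. -/
noncomputable def Omega (g : V → ℝ) (i : V) : ℝ :=
  (∑ j ∈ T.sons i, T.q i j * (g j - g i)) + T.q i (T.parent i) * (g (T.parent i) - g i)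

/-- The set of non-root vertices `T \ {0}`. -/
noncomputable def nonroot : Finset V := Finset.univ.filter fun i => i ≠ T.root

/-- The Dirichlet form `D(f)`. -/
noncomputable def D (f : V → ℝ) : ℝ :=
  ∑ i ∈ T.nonroot, T.mu i * T.q i (T.parent i) * (f i - f (T.parent i)) ^ 2

/-- `μ(f²)`. -/
noncomputable def norm2 (f : V → ℝ) : ℝ := ∑ i ∈ T.nonroot, T.mu i * f i ^ 2

/-- The principal Dirichlet eigenvalue `λ₀`, via the classical variational formula. -/
noncomputable def lam0 : ℝ := sInf {r | ∃ f : V → ℝ, f T.root = 0 ∧ T.norm2 f = 1 ∧ r = T.D f}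

/-- The single-summation operator `I`. -/
noncomputable def opI (f : V → ℝ) (i : V) : ℝ :=
  (∑ j ∈ T.subtree i, T.mu j * f j) /
    (T.mu i * T.q i (T.parent i) * (f i - f (T.parent i)))

/-- The double-summation operator `II`. -/
noncomputable def opII (f : V → ℝ) (i : V) : ℝ :=
  (∑ k ∈ T.pathSet i, (1 / (T.mu k * T.q k (T.parent k))) *
      ∑ j ∈ T.subtree k, T.mu j * f j) / f i

/-- The difference-form operator `R`; at a son of the root the convention `w_0 = ∞`,
`1/∞ = 0` is used, i.e. the term `w i⁻¹` is replaced by `0`. -/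
noncomputable def R (w : V → ℝ) (i : V) : ℝ :=
  T.q i (T.parent i) * (1 - (if T.parent i = T.root then 0 else (w i)⁻¹)) +
    ∑ j ∈ T.sons i, T.q i j * (1 - w j)

/-- Membership in the test-function class `W = {w : w > 1, w_0 = ∞}` (the value at a son
of the root plays the role of `∞` and is not used by `R`). -/
def memW (w : V → ℝ) : Prop := ∀ i, i ≠ T.root → T.parent i ≠ T.root → 1 < w i

/-- `φ_j = Σ_{k∈P(j)} 1/(μ_k q_{kk*})`. -/
noncomputable def phi (j : V) : ℝ :=
  ∑ k ∈ T.pathSet j, 1 / (T.mu k * T.q k (T.parent k))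

end BDTree

/-! Writing `F j = μ_j q_{jj*} (g_{j*} - g_j)` for the flux through the edge `j — j*`, detailed
balance `μ_j q_{jj*} = μ_{j*} q_{j*j}` turns the Poisson equation at `i` into
`Σ_{j ∈ J(i)} F j = μ_i f_i + F i`. Summing this over the vertices of `T_k` in layer `n + 1`,
whose sons are exactly the vertices of `T_k` in layer `n + 2`, gives the induction step in `n`. -/

lemma Finset.sum_filter_le_succ {α M : Type*} [AddCommMonoid M] (s : Finset α) (φ : α → ℕ)
    (h : α → M) (n : ℕ) :
    ∑ x ∈ s.filter (fun x => φ x ≤ n + 1), h x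
      = ∑ x ∈ s.filter (fun x => φ x ≤ n), h x + ∑ x ∈ s.filter (fun x => φ x = n + 1), h x := by
  rw [← sum_filter_add_sum_filter_not (s.filter (fun x => φ x ≤ n + 1)) (fun x => φ x ≤ n),
    filter_filter, filter_filter]
  congr 2 <;> exact filter_congr fun x _ => by omega

namespace BDTree

variable {V : Type*} [Fintype V] (T : BDTree V)

lemma iterate_parent_root (m : ℕ) : T.parent^[m] T.root = T.root :=
  Function.iterate_fixed T.parent_root m

lemma ne_root_of_layer_ne_zero {j : V} (h : T.layer j ≠ 0) : j ≠ T.root := by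
  rintro rfl
  exact h T.layer_root

lemma mem_subtree {j k : V} : j ∈ T.subtree k ↔ ∃ m, T.parent^[m] j = k := by
  simp [subtree]

lemma mem_sons {j k : V} : j ∈ T.sons k ↔ j ≠ T.root ∧ T.parent j = k := by
  simp [sons]

lemma mem_pathSet {j k : V} : j ∈ T.pathSet k ↔ j ≠ T.root ∧ ∃ m, T.parent^[m] k = j := by
  simp [pathSet]

lemma layer_eq_add_of_iterate_parent {j k : V} (hk : k ≠ T.root) {m : ℕ}
    (h : T.parent^[m] j = k) : T.layer j = T.layer k + m := by
  induction m generalizing j with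
  | zero => simp_all
  | succ m ih =>
    have hj : j ≠ T.root := by
      rintro rfl
      exact hk (h ▸ T.iterate_parent_root _)
    rw [Function.iterate_succ_apply] at h
    rw [T.layer_parent j hj, ih h]
    omega

lemma eq_of_mem_subtree_of_layer_le {j k : V} (hk : k ≠ T.root) (hj : j ∈ T.subtree k)
    (hl : T.layer j ≤ T.layer k) : j = k := by
  obtain ⟨m, hm⟩ := T.mem_subtree.1 hj
  obtain rfl : m = 0 := by have := T.layer_eq_add_of_iterate_parent hk hm; omega
  exact hm

lemma subtree_filter_layer_le_self {k : V} (hk : k ≠ T.root) :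
    (T.subtree k).filter (fun j => T.layer j ≤ T.layer k) = {k} := by
  ext j
  simp only [mem_filter, mem_singleton]
  refine ⟨fun h => T.eq_of_mem_subtree_of_layer_le hk h.1 h.2, ?_⟩
  rintro rfl
  exact ⟨T.mem_subtree.2 ⟨0, rfl⟩, le_rfl⟩

lemma subtree_filter_layer_eq_self {k : V} (hk : k ≠ T.root) :
    (T.subtree k).filter (fun j => T.layer j = T.layer k) = {k} := by
  rw [← T.subtree_filter_layer_le_self hk]
  ext j
  simp only [mem_filter, and_congr_right_iff]
  intro hj
  obtain ⟨m, hm⟩ := T.mem_subtree.1 hj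
  have := T.layer_eq_add_of_iterate_parent hk hm
  omega

lemma sum_subtree_layer_succ {M : Type*} [AddCommMonoid M] (h : V → M) {k : V} (hk : k ≠ T.root) {m : ℕ}
    (hm : T.layer k ≤ m) :
    ∑ j ∈ (T.subtree k).filter (fun j => T.layer j = m + 1), h j
      = ∑ v ∈ (T.subtree k).filter (fun v => T.layer v = m), ∑ j ∈ T.sons v, h j := by
  refine (sum_fiberwise_of_maps_to (g := T.parent) (fun j hj => ?_) h).symm.trans
    (sum_congr rfl fun v hv => ?_)
  · obtain ⟨hjs, hjl⟩ := mem_filter.1 hj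
    obtain ⟨_ | t, ht⟩ := T.mem_subtree.1 hjs
    · rw [Function.iterate_zero_apply] at ht
      subst ht
      omega
    · rw [Function.iterate_succ_apply] at ht
      have := T.layer_parent j (T.ne_root_of_layer_ne_zero (by omega))
      exact mem_filter.2 ⟨T.mem_subtree.2 ⟨t, ht⟩, by omega⟩
  · obtain ⟨hvs, hvl⟩ := mem_filter.1 hv
    obtain ⟨t, ht⟩ := T.mem_subtree.1 hvs
    congr 1
    ext j
    simp only [mem_filter, T.mem_subtree, T.mem_sons]
    constructor
    · rintro ⟨⟨-, hl⟩, hjv⟩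
      exact ⟨T.ne_root_of_layer_ne_zero (by omega), hjv⟩
    · rintro ⟨hj, rfl⟩
      exact ⟨⟨⟨t + 1, ht⟩, by rw [T.layer_parent j hj, hvl]⟩, rfl⟩

lemma pathSet_eq_insert_pathSet_parent {j : V} (hj : j ≠ T.root) :
    T.pathSet j = insert j (T.pathSet (T.parent j)) := by
  ext v
  simp only [T.mem_pathSet, mem_insert]
  constructor
  · rintro ⟨hv, _ | m, hm⟩
    · exact .inl hm.symm
    · exact .inr ⟨hv, m, hm⟩
  · rintro (rfl | ⟨hv, m, hm⟩)
    · exact ⟨hj, 0, rfl⟩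
    · exact ⟨hv, m + 1, hm⟩

lemma notMem_pathSet_parent {j : V} (hj : j ≠ T.root) : j ∉ T.pathSet (T.parent j) := by
  intro h
  obtain ⟨-, m, hm⟩ := T.mem_pathSet.1 h
  have := T.layer_eq_add_of_iterate_parent hj hm
  have := T.layer_parent j hj
  omega

lemma mu_mul_q_parent {j : V} (hj : j ≠ T.root) :
    T.mu j * T.q j (T.parent j) = T.mu (T.parent j) * T.q (T.parent j) j := by
  have hq := (T.q_pos_up j hj).ne'
  rw [mu, T.pathSet_eq_insert_pathSet_parent hj, prod_insert (T.notMem_pathSet_parent hj), ← mu]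
  field_simp

noncomputable def flux (g : V → ℝ) (j : V) : ℝ :=
  T.mu j * T.q j (T.parent j) * (g (T.parent j) - g j)

variable {g f : V → ℝ}

lemma sum_sons_flux {i : V} (hi : i ≠ T.root) (hpoisson : T.Omega g i = -f i) :
    ∑ j ∈ T.sons i, T.flux g j = T.mu i * f i + T.flux g i := by
  have hson : ∀ j ∈ T.sons i, T.flux g j = -(T.mu i * (T.q i j * (g j - g i))) := by
    intro j hj
    obtain ⟨hjr, rfl⟩ := T.mem_sons.1 hj
    rw [flux, T.mu_mul_q_parent hjr]
    ring
  rw [sum_congr rfl hson, sum_neg_distrib, ← mul_sum, flux]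
  rw [Omega] at hpoisson
  linear_combination (-T.mu i) * hpoisson

lemma sum_flux_subtree_layer_succ (hpoisson : ∀ i, i ≠ T.root → T.Omega g i = -f i)
    {k : V} (hk : k ≠ T.root) {m : ℕ} (hm : T.layer k ≤ m) :
    ∑ j ∈ (T.subtree k).filter (fun j => T.layer j = m + 1), T.flux g j
      = ∑ v ∈ (T.subtree k).filter (fun v => T.layer v = m), (T.mu v * f v + T.flux g v) := by
  refine (T.sum_subtree_layer_succ _ hk hm).trans (sum_congr rfl fun v hv => ?_)
  have hv : v ≠ T.root := T.ne_root_of_layer_ne_zero <| by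
    have := (mem_filter.1 hv).2
    have := T.layer_parent k hk
    omega
  exact T.sum_sons_flux hv (hpoisson v hv)

theorem sum_flux_subtree_layer_succ_eq (hpoisson : ∀ i, i ≠ T.root → T.Omega g i = -f i)
    {k : V} (hk : k ≠ T.root) {n : ℕ} (hkn : T.layer k ≤ n) :
    ∑ j ∈ (T.subtree k).filter (fun j => T.layer j = n + 1), T.flux g j
      = ∑ j ∈ (T.subtree k).filter (fun j => T.layer j ≤ n), T.mu j * f j + T.flux g k := by
  induction n, hkn using Nat.le_induction with
  | base =>
    rw [T.sum_flux_subtree_layer_succ hpoisson hk le_rfl, T.subtree_filter_layer_eq_self hk,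
      T.subtree_filter_layer_le_self hk, sum_singleton, sum_singleton]
  | succ n _ ih =>
    rw [T.sum_flux_subtree_layer_succ hpoisson hk (by omega), sum_add_distrib, ih,
      sum_filter_le_succ]
    ring

end BDTree

/-- the summation identity for solutions of the Poisson equation `Ω g = -f`. -/
theorem stmt2 {V : Type*} [Fintype V] (T : BDTree V) (g f : V → ℝ)
    (hpoisson : ∀ i, i ≠ T.root → T.Omega g i = -f i) (n : ℕ) (k : V)
    (hk : k ≠ T.root) (hkn : T.layer k ≤ n) :
    (∑ j ∈ (T.subtree k).filter (fun j => T.layer j = n + 1),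
        T.mu j * T.q j (T.parent j) * (g (T.parent j) - g j))
      + T.mu k * T.q k (T.parent k) * (g k - g (T.parent k))
      = ∑ j ∈ (T.subtree k).filter (fun j => T.layer j ≤ n), T.mu j * f j := by
  have h := T.sum_flux_subtree_layer_succ_eq hpoisson hk hkn
  simp only [BDTree.flux] at h
  linarith
end

section
/- If g is an eigenfunction of λ_0 on a finite tree with g_0 = 0 and g_i > g_{i*} for all i ∈ T\{0}, and w_i = g_i/g_{i*} (with w at the son of 0 equal to ∞), then R_i(w) = λ_0 for all i ∈ T\{0}. Consequently sup_{w∈W} inf_{i∈T\{0}} R_i(w) = λ_0 on finite trees, where W = {w : w > 1, w_0 = ∞}. -/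
open Finset
open scoped Classical

/-!
For `w = g / g ∘ parent` one has `R_i(w) g_i = -Ωg(i) = λ₀ g_i`, which gives the first claim and
shows that `λ₀` is attained in the supremum. Conversely, every `w ∈ W` is the ratio sequence of the
positive function `f_i = ∏ w_k` (product along the path from `i` to the root), and
`-Ωf ≥ (inf_i R_i(w)) f`. Green's formula for `Ω` together with Picone's inequality
`(x - y) (s²/x - t²/y) ≤ (s - t)²` then yields `(inf_i R_i(w)) μ(h²) ≤ D(h)` for every `h`
vanishing at the root, i.e. `inf_i R_i(w) ≤ λ₀`.
-/

lemma sub_mul_sq_div_sub_sq_div_le {x y : ℝ} (s t : ℝ) (hx : 0 < x) (hy : 0 ≤ y)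
    (hyt : y = 0 → t = 0) : (x - y) * (s ^ 2 / x - t ^ 2 / y) ≤ (s - t) ^ 2 := by
  rcases hy.eq_or_lt with rfl | hy
  -- the edge into the root, where `t ^ 2 / y = 0 / 0 = 0`
  · simp [hyt rfl, mul_div_cancel₀ _ hx.ne']
  · rw [div_sub_div _ _ hx.ne' hy.ne', ← mul_div_assoc, div_le_iff₀ (mul_pos hx hy)]
    nlinarith [sq_nonneg (x * t - y * s)]

namespace BDTree

variable {V : Type*} [Fintype V] (T : BDTree V)

lemma mem_nonroot {i : V} : i ∈ T.nonroot ↔ i ≠ T.root := by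
  simp [nonroot]

lemma layer_parent_lt {i : V} (hi : i ≠ T.root) : T.layer (T.parent i) < T.layer i := by
  rw [T.layer_parent i hi]
  omega

lemma layer_iterate_parent_le (n : ℕ) (j : V) : T.layer (T.parent^[n] j) ≤ T.layer j := by
  induction n with
  | zero => rfl
  | succ n ih =>
    rw [Function.iterate_succ_apply']
    by_cases h : T.parent^[n] j = T.root
    · rw [h, T.parent_root]
      rwa [h] at ih
    · exact (T.layer_parent_lt h).le.trans ih

lemma ne_root_of_mem_pathSet {k i : V} (hk : k ∈ T.pathSet i) : k ≠ T.root :=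
  (Finset.mem_filter.mp hk).2.1

lemma not_mem_pathSet_parent {i : V} (hi : i ≠ T.root) : i ∉ T.pathSet (T.parent i) := by
  rintro hi'
  obtain ⟨n, hn⟩ := (Finset.mem_filter.mp hi').2.2
  have := T.layer_iterate_parent_le n (T.parent i)
  rw [hn] at this
  exact (T.layer_parent_lt hi).not_ge this

lemma pathSet_eq_insert {i : V} (hi : i ≠ T.root) :
    T.pathSet i = insert i (T.pathSet (T.parent i)) := by
  ext k
  simp only [pathSet, Finset.mem_filter, Finset.mem_univ, true_and, Finset.mem_insert]
  constructor
  · rintro ⟨hk, _ | m, hm⟩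
    · exact Or.inl hm.symm
    · exact Or.inr ⟨hk, m, hm⟩
  · rintro (rfl | ⟨hk, m, hm⟩)
    · exact ⟨hi, 0, rfl⟩
    · exact ⟨hk, m + 1, hm⟩

lemma mu_pos (k : V) : 0 < T.mu k :=
  Finset.prod_pos fun j hj =>
    have hj := T.ne_root_of_mem_pathSet hj
    div_pos (T.q_pos_down j hj) (T.q_pos_up j hj)

lemma pos_of_parent_lt {f : V → ℝ} (hf0 : f T.root = 0)
    (hf : ∀ i, i ≠ T.root → f (T.parent i) < f i) {i : V} (hi : i ≠ T.root) : 0 < f i := by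
  obtain ⟨n, hn⟩ := T.reach i
  induction n generalizing i with
  | zero => exact absurd hn hi
  | succ n ih =>
    by_cases hp : T.parent i = T.root
    · simpa [hp, hf0] using hf i hi
    · exact (ih hp hn).trans (hf i hi)

lemma sum_sum_sons (F : V → ℝ) : ∑ i, ∑ j ∈ T.sons i, F j = ∑ j ∈ T.nonroot, F j := by
  have hsons : ∀ i, T.sons i = T.nonroot.filter fun j => T.parent j = i := fun i => by
    ext j
    simp [sons, nonroot]
  simp only [hsons]
  exact Finset.sum_fiberwise _ _ _

/-- Green's formula `-⟨Ωf, u⟩_μ = D(f, u)`. -/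
theorem sum_mu_mul_neg_Omega_mul (f u : V → ℝ) (hu : u T.root = 0) :
    ∑ i ∈ T.nonroot, T.mu i * -T.Omega f i * u i =
      ∑ i ∈ T.nonroot, T.mu i * T.q i (T.parent i) * (f i - f (T.parent i)) *
        (u i - u (T.parent i)) := by
  set G : V → ℝ := fun j => T.mu j * T.q j (T.parent j) * (f j - f (T.parent j))
  have hlocal : ∀ i, T.mu i * -T.Omega f i * u i =
      G i * u i - ∑ j ∈ T.sons i, G j * u (T.parent j) := by
    intro i
    have hson : ∀ j ∈ T.sons i, G j * u (T.parent j) = T.mu i * (T.q i j * (f j - f i)) * u i := by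
      intro j hj
      obtain ⟨hjr, rfl⟩ := (Finset.mem_filter.mp hj).2
      simp only [G]
      rw [T.mu_mul_q_parent hjr]
      ring
    rw [Finset.sum_congr rfl hson, ← Finset.sum_mul, ← Finset.mul_sum, Omega]
    ring
  have hnonroot : ∀ F : V → ℝ, F T.root = 0 → ∑ i ∈ T.nonroot, F i = ∑ i, F i := fun F hF =>
    Finset.sum_subset (Finset.subset_univ _) fun i _ hi => by
      rw [not_not.mp (mt T.mem_nonroot.mpr hi), hF]
  rw [hnonroot _ (by rw [hu, mul_zero]), Finset.sum_congr rfl fun i _ => hlocal i,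
    Finset.sum_sub_distrib, T.sum_sum_sons, ← hnonroot _ (by rw [hu, mul_zero]),
    ← Finset.sum_sub_distrib]
  exact Finset.sum_congr rfl fun i _ => by ring

/-- Barta's bound: Green's formula with `u = h² / f`, then Picone's inequality termwise. -/
theorem mul_norm2_le_D {f : V → ℝ} (hf0 : f T.root = 0) (hfpos : ∀ i, i ≠ T.root → 0 < f i)
    {c : ℝ} (hc : ∀ i, i ≠ T.root → c * f i ≤ -T.Omega f i) {h : V → ℝ} (hh0 : h T.root = 0) :
    c * T.norm2 h ≤ T.D h := by
  have hfnonneg : ∀ i, 0 ≤ f i := fun i => by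
    by_cases hi : i = T.root
    · rw [hi, hf0]
    · exact (hfpos i hi).le
  calc c * T.norm2 h = ∑ i ∈ T.nonroot, T.mu i * (c * f i) * (h i ^ 2 / f i) := by
        rw [norm2, Finset.mul_sum]
        refine Finset.sum_congr rfl fun i hi => ?_
        have := (hfpos i (T.mem_nonroot.mp hi)).ne'
        field_simp
    _ ≤ ∑ i ∈ T.nonroot, T.mu i * -T.Omega f i * (h i ^ 2 / f i) := by
        refine Finset.sum_le_sum fun i hi => ?_
        have hi := T.mem_nonroot.mp hi
        gcongr
        · exact div_nonneg (sq_nonneg _) (hfnonneg i)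
        · exact (T.mu_pos i).le
        · exact hc i hi
    _ = ∑ i ∈ T.nonroot, T.mu i * T.q i (T.parent i) * ((f i - f (T.parent i)) *
          (h i ^ 2 / f i - h (T.parent i) ^ 2 / f (T.parent i))) := by
        rw [T.sum_mu_mul_neg_Omega_mul f _ (by simp [hh0])]
        exact Finset.sum_congr rfl fun i _ => by ring
    _ ≤ T.D h := by
        refine Finset.sum_le_sum fun i hi => ?_
        have hi := T.mem_nonroot.mp hi
        refine mul_le_mul_of_nonneg_left ?_ (mul_pos (T.mu_pos i) (T.q_pos_up i hi)).le
        refine sub_mul_sq_div_sub_sq_div_le _ _ (hfpos i hi) (hfnonneg _) fun hp => ?_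
        by_contra hne
        exact (hfpos _ fun hr => hne (by rw [hr, hh0])).ne' hp

lemma exists_norm2_eq_one (hne : T.nonroot.Nonempty) :
    ∃ h : V → ℝ, h T.root = 0 ∧ T.norm2 h = 1 := by
  obtain ⟨i, hi⟩ := hne
  have hmu := T.mu_pos i
  refine ⟨Pi.single i (√(T.mu i))⁻¹, Pi.single_eq_of_ne (T.mem_nonroot.mp hi).symm _, ?_⟩
  rw [norm2, Finset.sum_eq_single_of_mem i hi fun j _ hj => by simp [Pi.single_eq_of_ne hj],
    Pi.single_eq_same, inv_pow, Real.sq_sqrt hmu.le, mul_inv_cancel₀ hmu.ne']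

theorem le_lam0_of_le_neg_Omega (hne : T.nonroot.Nonempty) {f : V → ℝ} (hf0 : f T.root = 0)
    (hfpos : ∀ i, i ≠ T.root → 0 < f i) {c : ℝ}
    (hc : ∀ i, i ≠ T.root → c * f i ≤ -T.Omega f i) : c ≤ T.lam0 := by
  obtain ⟨h, hh0, hh1⟩ := T.exists_norm2_eq_one hne
  refine le_csInf ⟨_, h, hh0, hh1, rfl⟩ ?_
  rintro r ⟨h, hh0, hh1, rfl⟩
  simpa [hh1] using T.mul_norm2_le_D hf0 hfpos hc hh0

theorem R_mul_eq_neg_Omega {w f : V → ℝ} (hf0 : f T.root = 0)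
    (hfw : ∀ j, j ≠ T.root → T.parent j ≠ T.root → f j = w j * f (T.parent j))
    {i : V} (hi : i ≠ T.root) (hwi : T.parent i ≠ T.root → w i ≠ 0) :
    T.R w i * f i = -T.Omega f i := by
  have hparent : T.q i (T.parent i) * (1 - if T.parent i = T.root then 0 else (w i)⁻¹) * f i =
      T.q i (T.parent i) * (f i - f (T.parent i)) := by
    by_cases hp : T.parent i = T.root
    · rw [if_pos hp, hp, hf0]
      ring
    · rw [if_neg hp, hfw i hi hp]
      field_simp [hwi hp]
  have hsons : ∀ j ∈ T.sons i, T.q i j * (1 - w j) * f i = -(T.q i j * (f j - f i)) := by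
    intro j hj
    obtain ⟨hjr, rfl⟩ := (Finset.mem_filter.mp hj).2
    rw [hfw j hjr hi]
    ring
  rw [R, Omega, add_mul, Finset.sum_mul, hparent, Finset.sum_congr rfl hsons,
    Finset.sum_neg_distrib]
  ring

/-- Product of `w` along the path to the root; the son of the root, where `w = ∞`, contributes
the factor `1`. -/
noncomputable def ratioProd (w : V → ℝ) (i : V) : ℝ :=
  if i = T.root then 0 else ∏ k ∈ T.pathSet i, if T.parent k = T.root then 1 else w k

lemma ratioProd_root (w : V → ℝ) : T.ratioProd w T.root = 0 :=
  if_pos rfl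

lemma ratioProd_pos {w : V → ℝ} (hw : T.memW w) {i : V} (hi : i ≠ T.root) :
    0 < T.ratioProd w i := by
  rw [ratioProd, if_neg hi]
  refine Finset.prod_pos fun k hk => ?_
  split_ifs with hpk
  · exact one_pos
  · exact one_pos.trans (hw k (T.ne_root_of_mem_pathSet hk) hpk)

lemma ratioProd_eq_mul_parent (w : V → ℝ) {j : V} (hj : j ≠ T.root) (hpj : T.parent j ≠ T.root) :
    T.ratioProd w j = w j * T.ratioProd w (T.parent j) := by
  rw [ratioProd, ratioProd, if_neg hj, if_neg hpj, T.pathSet_eq_insert hj,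
    Finset.prod_insert (T.not_mem_pathSet_parent hj), if_neg hpj]

theorem inf'_R_le_lam0 (hne : T.nonroot.Nonempty) {w : V → ℝ} (hw : T.memW w) :
    T.nonroot.inf' hne (T.R w) ≤ T.lam0 := by
  refine T.le_lam0_of_le_neg_Omega hne (T.ratioProd_root w) (fun i => T.ratioProd_pos hw)
    fun i hi => ?_
  rw [← T.R_mul_eq_neg_Omega (T.ratioProd_root w) (fun j => T.ratioProd_eq_mul_parent w) hi
    fun hp => (one_pos.trans (hw i hi hp)).ne']
  exact mul_le_mul_of_nonneg_right (Finset.inf'_le _ (T.mem_nonroot.mpr hi))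
    (T.ratioProd_pos hw hi).le

end BDTree

/-- on a finite tree, with `w_i = g_i/g_{i*}` for the eigenfunction `g`,
`R_i(w) = λ₀` for all `i ≠ 0`; consequently `sup_{w∈W} inf_i R_i(w) = λ₀`. -/
theorem stmt11 {V : Type*} [Fintype V] (T : BDTree V) (hne : T.nonroot.Nonempty)
    (g : V → ℝ)
    (heig : ∀ i, i ≠ T.root → T.Omega g i = -T.lam0 * g i)
    (hg0 : g T.root = 0)
    (hginc : ∀ i, i ≠ T.root → g (T.parent i) < g i) :
    (∀ i, i ≠ T.root → T.R (fun j => g j / g (T.parent j)) i = T.lam0) ∧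
    sSup {x | ∃ w, T.memW w ∧ x = T.nonroot.inf' hne fun i => T.R w i} = T.lam0 := by
  have hgpos : ∀ i, i ≠ T.root → 0 < g i := fun i => T.pos_of_parent_lt hg0 hginc
  have hR : ∀ i, i ≠ T.root → T.R (fun j => g j / g (T.parent j)) i = T.lam0 := by
    intro i hi
    have hgi := (hgpos i hi).ne'
    have := T.R_mul_eq_neg_Omega hg0
      (fun j _ hpj => (div_mul_cancel₀ _ (hgpos _ hpj).ne').symm) hi
      fun hp => div_ne_zero hgi (hgpos _ hp).ne'
    rw [heig i hi, neg_mul, neg_neg] at this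
    exact mul_right_cancel₀ hgi this
  have hW : T.memW fun j => g j / g (T.parent j) := fun i hi hpi =>
    (one_lt_div (hgpos _ hpi)).mpr (hginc i hi)
  refine ⟨hR, IsGreatest.csSup_eq ⟨⟨_, hW, ?_⟩, ?_⟩⟩
  · rw [Finset.inf'_congr hne rfl fun i hi => hR i (T.mem_nonroot.mp hi), Finset.inf'_const]
  · rintro x ⟨w, hw, rfl⟩
    exact T.inf'_R_le_lam0 hne hw
end
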